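/- For every k ≥ 3, there exists a tournament on 2·r(k−1) − 1 vertices with no perfect fractional T_k-tiling; hence trs(k) ≥ 2·r(k−1). -/

import Mathlib

open Finset

/-- An oriented graph: at most one directed edge between any pair of vertices. -/
structure OrientedGraph (V : Type*) where
  adj : V → V → Prop
  asymm : ∀ u v, adj u v → ¬ adj v u

namespace OrientedGraph

variable {V : Type*}

/-- A tournament: a complete oriented graph. -/
def IsTournament (G : OrientedGraph V) : Prop :=
  ∀ u v : V, u ≠ v → G.adj u v ∨ G.adj v u

/-- `U` is the vertex set of a copy of the transitive tournament on `k` vertices in `G`. -/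
def IsTTCopy (G : OrientedGraph V) (k : ℕ) (U : Finset V) : Prop :=
  ∃ f : Fin k ↪ V, Finset.univ.map f = U ∧
    ∀ i j : Fin k, i < j → G.adj (f i) (f j)

/-- Total degree of a vertex: the number of edges incident to it. -/
noncomputable def degree [Fintype V] (G : OrientedGraph V) (v : V) : ℕ :=
  Nat.card {u : V // G.adj v u ∨ G.adj u v}

/-- Minimum total degree. -/
noncomputable def minDegree [Fintype V] (G : OrientedGraph V) : ℕ :=
  sInf (Set.range G.degree)

/-- Number of (directed) edges. -/
noncomputable def edgeCount [Fintype V] (G : OrientedGraph V) : ℕ :=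
  Nat.card {p : V × V // G.adj p.1 p.2}

section
variable [Fintype V] [DecidableEq V]

/-- A fractional `T_k`-tiling: a weight function on copies of the transitive tournament
`T_k` such that every vertex has total incident weight at most `1`. -/
def IsFracTiling (G : OrientedGraph V) (k : ℕ) (w : Finset V → ℝ) : Prop :=
  (∀ U, 0 ≤ w U) ∧ (∀ U, ¬ G.IsTTCopy k U → w U = 0) ∧
    ∀ v : V, ∑ U ∈ Finset.univ.filter (fun U => v ∈ U), w U ≤ 1

/-- A perfect fractional `T_k`-tiling: total weight `n/k`. -/
def HasPerfectFracTiling (G : OrientedGraph V) (k : ℕ) : Prop :=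
  ∃ w : Finset V → ℝ, G.IsFracTiling k w ∧
    ∑ U : Finset V, w U = (Fintype.card V : ℝ) / k

/-- A perfect `T_k`-tiling: vertex-disjoint copies of `T_k` covering all vertices. -/
def HasPerfectTiling (G : OrientedGraph V) (k : ℕ) : Prop :=
  ∃ P : Finset (Finset V), (∀ U ∈ P, G.IsTTCopy k U) ∧
    (P : Set (Finset V)).PairwiseDisjoint id ∧ P.sup id = Finset.univ

end

end OrientedGraph

/-- The oriented Ramsey number `r(k)`: the least `m` such that every tournament on `m`
vertices contains a copy of the transitive tournament `T_k`. -/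
noncomputable def oRamsey (k : ℕ) : ℕ :=
  sInf {m | ∀ G : OrientedGraph (Fin m), G.IsTournament → ∃ U, G.IsTTCopy k U}

/-- `trs k`: the least (positive) `n` such that every tournament on `n` vertices has a
perfect fractional `T_k`-tiling. -/
noncomputable def trs (k : ℕ) : ℕ :=
  sInf {n | 0 < n ∧ ∀ G : OrientedGraph (Fin n), G.IsTournament → G.HasPerfectFracTiling k}

/-- `trInt k`: the least (positive) `n` such that every tournament on `n` vertices has a
perfect `T_k`-tiling. -/
noncomputable def trInt (k : ℕ) : ℕ :=
  sInf {n | 0 < n ∧ ∀ G : OrientedGraph (Fin n), G.IsTournament → G.HasPerfectTiling k}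

/-!
The apex of a blow-up of the directed triangle whose other two parts are `T_{k-1}`-free
tournaments on `r(k-1) - 1` vertices lies in no `T_k`: in a transitive ordering its
in-neighbours come before it and its out-neighbours after it, while every edge between the two
parts goes from the out-neighbours to the in-neighbours, so all other vertices of the copy lie in
one part. A vertex in no `T_k` rules out a perfect fractional tiling, because the vertex loads
of a perfect fractional tiling add up to `n`.

Since `trs k` is an `sInf` in `ℕ`, which is `0` for the empty set, one also has to show that
large tournaments do have perfect fractional `T_k`-tilings. By Hahn–Banach it suffices that
every weighting `y` of the vertices with nonpositive sum on each `T_k` has nonpositive total.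
Fewer than `r(k)` vertices are positive; let `Q` be the `2r(k-1) - 1` largest nonpositive ones
and `-M` the least value on `Q`. Each positive vertex `v` lies in a `T_k` inside `Q ∪ {v}`,
so `y v ≤ (k - 1) M`, and this is paid for by the at least `(r(k) - 1)(k - 1)` nonpositive
vertices outside `Q`, each of weight at most `-M`.
-/

open OrientedGraph

theorem Finset.exists_embedding_fin_range_eq {V : Type*} {S : Finset V} {m : ℕ}
    (h : S.card = m) : ∃ ι : Fin m ↪ V, Set.range ι = S := by
  subst h
  refine ⟨S.equivFin.symm.toEmbedding.trans (Function.Embedding.subtype _), ?_⟩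
  ext x
  exact ⟨fun ⟨y, hy⟩ => hy ▸ (S.equivFin.symm y).2,
    fun hx => ⟨S.equivFin ⟨x, hx⟩, by simp⟩⟩

theorem Finset.le_of_forall_sum_le_sum {ι : Type*} [DecidableEq ι] {C Q : Finset ι}
    {y : ι → ℝ} (hQC : Q ⊆ C)
    (hQ : ∀ S ∈ C.powersetCard Q.card, ∑ v ∈ S, y v ≤ ∑ v ∈ Q, y v)
    {u q : ι} (hu : u ∈ C \ Q) (hq : q ∈ Q) : y u ≤ y q := by
  obtain ⟨huC, huQ⟩ := mem_sdiff.1 hu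
  have huQ' : u ∉ Q.erase q := fun h => huQ (mem_of_mem_erase h)
  have hS : insert u (Q.erase q) ∈ C.powersetCard Q.card := by
    refine mem_powersetCard.2 ⟨insert_subset huC ((erase_subset q Q).trans hQC), ?_⟩
    rw [card_insert_of_notMem huQ', card_erase_add_one hq]
  have := hQ _ hS
  rw [sum_insert huQ', ← add_sum_erase Q y hq] at this
  linarith

namespace OrientedGraph

section Transitive

variable {V W : Type*} (G : OrientedGraph V)

def comap (ι : W → V) : OrientedGraph W where
  adj a b := G.adj (ι a) (ι b)
  asymm _ _ h := G.asymm _ _ h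

def IsTTHom {j : ℕ} (g : Fin j → V) : Prop :=
  ∀ a b : Fin j, a < b → G.adj (g a) (g b)

variable {G}

theorem IsTournament.comap (hG : G.IsTournament) {ι : W → V} (hι : Function.Injective ι) :
    (G.comap ι).IsTournament :=
  fun _ _ hab => hG _ _ (hι.ne hab)

theorem IsTTCopy.card_eq {j : ℕ} {U : Finset V} (hU : G.IsTTCopy j U) : U.card = j := by
  obtain ⟨f, rfl, -⟩ := hU
  simp

theorem IsTTCopy.map {j : ℕ} {U : Finset W} (ι : W ↪ V) (hU : (G.comap ι).IsTTCopy j U) :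
    G.IsTTCopy j (U.map ι) := by
  obtain ⟨f, rfl, hf⟩ := hU
  exact ⟨f.trans ι, by rw [Finset.map_map], hf⟩

theorem IsTTHom.injective {j : ℕ} {g : Fin j → V} (hg : G.IsTTHom g) :
    Function.Injective g := by
  intro a b hab
  by_contra hne
  rcases lt_or_gt_of_ne hne with h | h
  · have h' := hg a b h
    rw [hab] at h'
    exact G.asymm _ _ h' h'
  · have h' := hg b a h
    rw [hab] at h'
    exact G.asymm _ _ h' h'

theorem IsTTHom.isTTCopy [DecidableEq V] {j : ℕ} {g : Fin j → V} (hg : G.IsTTHom g) :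
    G.IsTTCopy j (univ.image g) :=
  ⟨⟨g, hg.injective⟩, by simp [Finset.map_eq_image], hg⟩

theorem IsTTHom.cons {j : ℕ} {g : Fin j → V} (hg : G.IsTTHom g) {v : V}
    (hv : ∀ i, G.adj v (g i)) : G.IsTTHom (Fin.cons v g : Fin (j + 1) → V) := by
  intro a b hab
  induction a using Fin.cases <;> induction b using Fin.cases <;>
    simp_all [Fin.succ_lt_succ_iff]
  exact hg _ _ hab

theorem IsTTHom.snoc {j : ℕ} {g : Fin j → V} (hg : G.IsTTHom g) {v : V}
    (hv : ∀ i, G.adj (g i) v) : G.IsTTHom (Fin.snoc g v : Fin (j + 1) → V) := by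
  intro a b hab
  induction a using Fin.lastCases <;> induction b using Fin.lastCases <;>
    simp_all [Fin.castSucc_lt_castSucc_iff, (Fin.castSucc_lt_last _).not_gt]
  exact hg _ _ hab

theorem IsTournament.exists_isTTHom_extend (hG : G.IsTournament) {j m : ℕ}
    (hm : ∀ T : Finset V, m ≤ T.card → ∃ g : Fin j → V, G.IsTTHom g ∧ Set.range g ⊆ T)
    {v : V} {S : Finset V} (hv : v ∉ S) (hS : 2 * m - 1 ≤ S.card) :
    ∃ g : Fin (j + 1) → V,
      G.IsTTHom g ∧ v ∈ Set.range g ∧ Set.range g ⊆ insert v S := by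
  classical
  set O := S.filter (G.adj v ·)
  set I := S.filter (G.adj · v)
  have hOI : S.card ≤ O.card + I.card := by
    refine (card_le_card fun u hu => ?_).trans (card_union_le O I)
    have huv : u ≠ v := fun h => hv (h ▸ hu)
    rcases hG u v huv with h | h <;> simp [O, I, hu, h]
  rcases le_or_gt m O.card with hO | hI
  · obtain ⟨g, hg, hgO⟩ := hm O hO
    have hadj : ∀ i, G.adj v (g i) := fun i => (mem_filter.1 (hgO ⟨i, rfl⟩)).2
    refine ⟨Fin.cons v g, hg.cons hadj, by simp [Fin.range_cons], ?_⟩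
    rw [Fin.range_cons]
    exact Set.insert_subset_insert (hgO.trans (coe_subset.2 (filter_subset _ _)))
  · obtain ⟨g, hg, hgI⟩ := hm I (by omega)
    have hadj : ∀ i, G.adj (g i) v := fun i => (mem_filter.1 (hgI ⟨i, rfl⟩)).2
    refine ⟨Fin.snoc g v, hg.snoc hadj, by simp [Fin.range_snoc], ?_⟩
    rw [Fin.range_snoc]
    exact Set.insert_subset_insert (hgI.trans (coe_subset.2 (filter_subset _ _)))

theorem IsTournament.exists_isTTHom_of_two_pow_le (hG : G.IsTournament) :
    ∀ {j : ℕ} {S : Finset V}, 2 ^ j ≤ S.card →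
      ∃ g : Fin j → V, G.IsTTHom g ∧ Set.range g ⊆ S
  | 0, _, _ => ⟨Fin.elim0, fun a => a.elim0, by simp⟩
  | j + 1, S, hS => by
    classical
    obtain ⟨v, hv⟩ := card_pos.1 (lt_of_lt_of_le (by positivity : 0 < 2 ^ (j + 1)) hS)
    obtain ⟨g, hg, -, hgS⟩ := hG.exists_isTTHom_extend (m := 2 ^ j)
      (fun _ hT => hG.exists_isTTHom_of_two_pow_le hT) (S.notMem_erase v)
      (by rw [card_erase_of_mem hv]; rw [pow_succ] at hS; omega)
    exact ⟨g, hg, hgS.trans (Set.insert_subset_iff.2 ⟨hv, coe_subset.2 (erase_subset _ _)⟩)⟩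

end Transitive

end OrientedGraph

theorem oRamsey_mem (j : ℕ) :
    oRamsey j ∈
      {m | ∀ G : OrientedGraph (Fin m), G.IsTournament → ∃ U, G.IsTTCopy j U} := by
  classical
  refine Nat.sInf_mem ⟨2 ^ j, fun G hG => ?_⟩
  obtain ⟨g, hg, -⟩ := hG.exists_isTTHom_of_two_pow_le (j := j) (S := univ) (by simp)
  exact ⟨_, hg.isTTCopy⟩

theorem one_le_oRamsey {j : ℕ} (hj : 1 ≤ j) : 1 ≤ oRamsey j := by
  by_contra! h
  have hmem := oRamsey_mem j
  rw [Nat.lt_one_iff.1 h] at hmem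
  obtain ⟨U, hU⟩ := hmem ⟨fun _ _ => False, fun _ _ h => h.elim⟩ (fun u => u.elim0)
  have := hU.card_eq ▸ card_le_univ U
  simp at this
  omega

theorem exists_tournament_forall_not_isTTHom {j : ℕ} (hj : 1 ≤ j) :
    ∃ G : OrientedGraph (Fin (oRamsey j - 1)),
      G.IsTournament ∧ ∀ g : Fin j → _, ¬ G.IsTTHom g := by
  have hlt : oRamsey j - 1 < oRamsey j := by have := one_le_oRamsey hj; omega
  have h : oRamsey j - 1 ∉
      {m | ∀ G : OrientedGraph (Fin m), G.IsTournament → ∃ U, G.IsTTCopy j U} :=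
    Nat.notMem_of_lt_sInf hlt
  obtain ⟨G, hG, hfree⟩ : ∃ G : OrientedGraph (Fin (oRamsey j - 1)), G.IsTournament ∧
      ∀ U, ¬ G.IsTTCopy j U := by simpa using h
  exact ⟨G, hG, fun g hg => hfree _ hg.isTTCopy⟩

theorem OrientedGraph.IsTournament.exists_isTTHom_of_oRamsey_le {V : Type*}
    {G : OrientedGraph V} (hG : G.IsTournament) {j : ℕ} {S : Finset V}
    (hS : oRamsey j ≤ S.card) :
    ∃ g : Fin j → V, G.IsTTHom g ∧ Set.range g ⊆ S := by
  obtain ⟨T, hTS, hT⟩ := exists_subset_card_eq hS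
  obtain ⟨ι, hι⟩ := exists_embedding_fin_range_eq hT
  obtain ⟨U, f, -, hf⟩ := oRamsey_mem j (G.comap ι) (hG.comap ι.injective)
  exact ⟨ι ∘ f, hf, (Set.range_comp_subset_range f ι).trans (hι ▸ coe_subset.2 hTS)⟩

namespace OrientedGraph

section TriangleBlowup

variable {α β : Type*}

/-- The blow-up of the directed triangle `α → none → β → α`, with `A` inside `α` and `B`
inside `β`. -/
def triangleBlowup (A : OrientedGraph α) (B : OrientedGraph β) :
    OrientedGraph (Option (α ⊕ β)) where
  adj
    | some (.inl a), some (.inl a') => A.adj a a'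
    | some (.inr b), some (.inr b') => B.adj b b'
    | some (.inl _), none => True
    | none, some (.inr _) => True
    | some (.inr _), some (.inl _) => True
    | _, _ => False
  asymm := by
    rintro (_ | a | b) (_ | a' | b') <;> simp
    · exact A.asymm a a'
    · exact B.asymm b b'

variable {A : OrientedGraph α} {B : OrientedGraph β}

theorem IsTournament.triangleBlowup (hA : A.IsTournament) (hB : B.IsTournament) :
    (A.triangleBlowup B).IsTournament := by
  rintro (_ | a | b) (_ | a' | b') hne <;> simp [OrientedGraph.triangleBlowup] at hne ⊢
  · exact hA a a' hne
  · exact hB b b' hne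

theorem triangleBlowup_none_adj_iff {x : Option (α ⊕ β)} :
    (A.triangleBlowup B).adj none x ↔ ∃ b, x = some (.inr b) := by
  rcases x with _ | a | b <;> simp [OrientedGraph.triangleBlowup]

theorem triangleBlowup_adj_none_iff {x : Option (α ⊕ β)} :
    (A.triangleBlowup B).adj x none ↔ ∃ a, x = some (.inl a) := by
  rcases x with _ | a | b <;> simp [OrientedGraph.triangleBlowup]

theorem none_notMem_of_isTTCopy_triangleBlowup {j : ℕ}
    (hA : ∀ g : Fin j → α, ¬ A.IsTTHom g) (hB : ∀ g : Fin j → β, ¬ B.IsTTHom g)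
    {U : Finset (Option (α ⊕ β))} (hU : (A.triangleBlowup B).IsTTCopy (j + 1) U) :
    none ∉ U := by
  obtain ⟨f, rfl, hf⟩ := hU
  intro hmem
  obtain ⟨p, -, hp⟩ := mem_map.1 hmem
  have hp' : p = 0 ∨ p = Fin.last j := by
    by_contra! hne
    have h0 := Fin.pos_iff_ne_zero.2 hne.1
    have hl := Fin.lt_last_iff_ne_last.2 hne.2
    obtain ⟨a, ha⟩ := triangleBlowup_adj_none_iff.1 (hp ▸ hf 0 p h0)
    obtain ⟨b, hb⟩ := triangleBlowup_none_adj_iff.1 (hp ▸ hf p (Fin.last j) hl)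
    have h := hf 0 (Fin.last j) (h0.trans hl)
    rw [ha, hb] at h
    exact h
  rcases hp' with rfl | rfl
  · choose g hg using fun i : Fin j =>
      triangleBlowup_none_adj_iff.1 (hp ▸ hf 0 i.succ i.succ_pos)
    refine hB g fun a b hab => ?_
    have h := hf _ _ (Fin.succ_lt_succ_iff.2 hab)
    rwa [hg, hg] at h
  · choose g hg using fun i : Fin j =>
      triangleBlowup_adj_none_iff.1 (hp ▸ hf i.castSucc (Fin.last j) i.castSucc_lt_last)
    refine hA g fun a b hab => ?_
    have h := hf _ _ (Fin.castSucc_lt_castSucc_iff.2 hab)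
    rwa [hg, hg] at h

end TriangleBlowup

section Tiling

variable {V : Type*} [Fintype V] {G : OrientedGraph V} {k : ℕ}

def copySimplex (G : OrientedGraph V) (k : ℕ) : Set (Finset V → ℝ) :=
  stdSimplex ℝ (Finset V) ∩ {c | ∀ U, ¬ G.IsTTCopy k U → c U = 0}

theorem convex_copySimplex : Convex ℝ (G.copySimplex k) :=
  (convex_stdSimplex ℝ _).inter fun c hc d hd a b _ _ _ U hU => by simp [hc U hU, hd U hU]

theorem isCompact_copySimplex : IsCompact (G.copySimplex k) := by
  refine (isCompact_stdSimplex ℝ (Finset V)).inter_right ?_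
  simp only [Set.ofPred_forall]
  exact isClosed_iInter fun U => isClosed_iInter fun _ =>
    isClosed_eq (continuous_apply U) continuous_const

variable [DecidableEq V]

def vertexLoad : (Finset V → ℝ) →ₗ[ℝ] V → ℝ where
  toFun w v := ∑ U ∈ univ.filter (fun U => v ∈ U), w U
  map_add' w w' := by ext v; simp [sum_add_distrib]
  map_smul' c w := by ext v; simp [mul_sum]

theorem vertexLoad_apply (w : Finset V → ℝ) (v : V) :
    vertexLoad w v = ∑ U ∈ univ.filter (fun U => v ∈ U), w U := rfl

theorem sum_vertexLoad (w : Finset V → ℝ) :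
    ∑ v, vertexLoad w v = ∑ U, (U.card : ℝ) * w U := by
  simp_rw [vertexLoad_apply, sum_filter]
  rw [sum_comm]
  simp

theorem IsFracTiling.sum_vertexLoad {w : Finset V → ℝ} (hw : G.IsFracTiling k w) :
    ∑ v, vertexLoad w v = k * ∑ U, w U := by
  rw [OrientedGraph.sum_vertexLoad, mul_sum]
  refine sum_congr rfl fun U _ => ?_
  by_cases hU : G.IsTTCopy k U
  · rw [hU.card_eq]
  · simp [hw.2.1 U hU]

theorem not_hasPerfectFracTiling_of_forall_notMem (hk : 0 < k) {x : V}
    (hx : ∀ U, G.IsTTCopy k U → x ∉ U) : ¬ G.HasPerfectFracTiling k := by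
  rintro ⟨w, hw, htot⟩
  have hx0 : vertexLoad w x = 0 :=
    sum_eq_zero fun U hU => hw.2.1 U fun hcU => hx U hcU (mem_filter.1 hU).2
  have htotal : ∑ v, vertexLoad w v = Fintype.card V := by
    rw [hw.sum_vertexLoad, htot]
    field_simp
  have hle : ∑ v, vertexLoad w v ≤ Fintype.card V - 1 := by
    rw [← add_sum_erase _ _ (mem_univ x), hx0, zero_add]
    calc _ ≤ ∑ v ∈ univ.erase x, (1 : ℝ) := sum_le_sum fun v _ => hw.2.2 v
      _ = Fintype.card V - 1 := by
        rw [sum_const, card_erase_of_mem (mem_univ x), nsmul_one, card_univ,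
          Nat.cast_sub (Fintype.card_pos_iff.2 ⟨x⟩), Nat.cast_one]
  linarith

theorem single_mem_copySimplex {U : Finset V} (hU : G.IsTTCopy k U) :
    Pi.single U 1 ∈ G.copySimplex k :=
  ⟨single_mem_stdSimplex ℝ U, fun _ hT => Pi.single_eq_of_ne (by rintro rfl; exact hT hU) 1⟩

theorem hasPerfectFracTiling_of_vertexLoad_eq [Nonempty V] (hk : 0 < k) {c : Finset V → ℝ}
    (hc : c ∈ G.copySimplex k) (hload : vertexLoad c = fun _ => (k : ℝ) / Fintype.card V) :
    G.HasPerfectFracTiling k := by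
  obtain ⟨⟨hc0, hc1⟩, hcU⟩ := hc
  have hn : (0 : ℝ) < Fintype.card V := Nat.cast_pos.2 Fintype.card_pos
  refine ⟨(Fintype.card V / k : ℝ) • c, ⟨fun U => ?_, fun U hU => ?_, fun v => ?_⟩, ?_⟩
  · exact mul_nonneg (by positivity) (hc0 U)
  · simp [hcU U hU]
  · rw [← vertexLoad_apply, map_smul, Pi.smul_apply, hload, smul_eq_mul, div_mul_div_comm,
      mul_comm (Fintype.card V : ℝ), div_self (by positivity)]
  · simp [← mul_sum, hc1]

theorem hasPerfectFracTiling_of_forall_sum_nonpos [Nonempty V] (hk : 0 < k)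
    (h : ∀ y : V → ℝ, (∀ U, G.IsTTCopy k U → ∑ v ∈ U, y v ≤ 0) →
      ∑ v, y v ≤ 0) :
    G.HasPerfectFracTiling k := by
  set n : ℝ := (Fintype.card V : ℝ)
  have hn : 0 < n := Nat.cast_pos.2 Fintype.card_pos
  have hk' : (0 : ℝ) < k := Nat.cast_pos.2 hk
  by_cases hmem : (fun _ => k / n) ∈ vertexLoad '' G.copySimplex k
  · obtain ⟨c, hc, hload⟩ := hmem
    exact hasPerfectFracTiling_of_vertexLoad_eq hk hc hload
  obtain ⟨f, u, hfA, hfu⟩ := geometric_hahn_banach_closed_point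
    (convex_copySimplex.linear_image _)
    (isCompact_copySimplex.image vertexLoad.continuous_of_finiteDimensional).isClosed hmem
  set y : V → ℝ := fun v => f fun j => if v = j then 1 else 0
  have hf : ∀ x, f x = ∑ v, x v * y v := fun x =>
    LinearMap.pi_apply_eq_sum_univ f.toLinearMap x
  have hcopy : ∀ U, G.IsTTCopy k U → ∑ v ∈ U, y v < u := fun U hU => by
    have hload : vertexLoad (Pi.single U 1) = fun v => if v ∈ U then 1 else 0 := by
      ext v
      simp [vertexLoad_apply, Pi.single_apply]
    simpa [hf, hload] using hfA _ ⟨_, single_mem_copySimplex hU, rfl⟩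
  have htotal : n * u < k * ∑ v, y v := by
    have := hf (fun _ => k / n) ▸ hfu
    rw [← mul_sum, div_mul_eq_mul_div, lt_div_iff₀ hn] at this
    linarith
  refine absurd (h (fun v => y v - u / k) fun U hU => ?_) ?_
  · rw [sum_sub_distrib, sum_const, hU.card_eq, nsmul_eq_mul, mul_div_cancel₀ _ hk'.ne']
    linarith [hcopy U hU]
  · rw [sum_sub_distrib, sum_const, card_univ, nsmul_eq_mul, not_le, sub_pos, mul_div_assoc',
      div_lt_iff₀ hk']
    linarith

end Tiling

section Dual

variable {V : Type*} [DecidableEq V] {G : OrientedGraph V} {k : ℕ} {y : V → ℝ}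

theorem IsTournament.card_filter_pos_lt_oRamsey [Fintype V] (hG : G.IsTournament) (hk : 1 ≤ k)
    (hy : ∀ U, G.IsTTCopy k U → ∑ v ∈ U, y v ≤ 0) :
    (univ.filter (0 < y ·)).card < oRamsey k := by
  by_contra! h
  obtain ⟨g, hg, hgP⟩ := hG.exists_isTTHom_of_oRamsey_le h
  refine (hy _ hg.isTTCopy).not_gt
    (sum_pos (fun v hv => ?_) ⟨g ⟨0, hk⟩, mem_image_of_mem g (mem_univ _)⟩)
  obtain ⟨i, -, rfl⟩ := mem_image.1 hv
  exact (mem_filter.1 (hgP ⟨i, rfl⟩)).2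

theorem IsTournament.add_mul_le_zero_of_forall_le (hG : G.IsTournament) (hk : 2 ≤ k)
    (hy : ∀ U, G.IsTTCopy k U → ∑ v ∈ U, y v ≤ 0) {Q : Finset V}
    (hQ : 2 * oRamsey (k - 1) - 1 ≤ Q.card) {v : V} (hv : v ∉ Q) {a : ℝ}
    (ha : ∀ q ∈ Q, a ≤ y q) : y v + (k - 1 : ℕ) * a ≤ 0 := by
  obtain ⟨j, rfl⟩ : ∃ j, k = j + 1 := ⟨k - 1, by omega⟩
  rw [Nat.add_sub_cancel] at hQ ⊢
  obtain ⟨g, hg, ⟨i, rfl⟩, hgQ⟩ :=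
    hG.exists_isTTHom_extend (fun _ hT => hG.exists_isTTHom_of_oRamsey_le hT) hv hQ
  have hU := hg.isTTCopy
  have hvU : g i ∈ univ.image g := mem_image_of_mem g (mem_univ i)
  have hrest : ∀ q ∈ (univ.image g).erase (g i), a ≤ y q := by
    intro q hq
    obtain ⟨hqv, hqU⟩ := mem_erase.1 hq
    obtain ⟨i', -, rfl⟩ := mem_image.1 hqU
    exact ha _ ((Set.mem_insert_iff.1 (hgQ ⟨i', rfl⟩)).resolve_left hqv)
  have hsum := card_nsmul_le_sum _ y a hrest
  rw [card_erase_of_mem hvU, hU.card_eq, Nat.add_sub_cancel, nsmul_eq_mul] at hsum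
  have := hy _ hU
  rw [← add_sum_erase _ y hvU] at this
  linarith

theorem IsTournament.sum_nonpos_of_forall_isTTCopy [Fintype V] (hG : G.IsTournament) (hk : 2 ≤ k)
    (hn : (oRamsey k - 1) * (k - 1) + oRamsey k + 2 * oRamsey (k - 1) ≤ Fintype.card V)
    (hy : ∀ U, G.IsTTCopy k U → ∑ v ∈ U, y v ≤ 0) : ∑ v, y v ≤ 0 := by
  have hP := hG.card_filter_pos_lt_oRamsey (by omega) hy
  set P := univ.filter (0 < y ·)
  set C := univ.filter (¬ 0 < y ·)
  set s := 2 * oRamsey (k - 1) - 1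
  have hs : 1 ≤ s := by have := one_le_oRamsey (j := k - 1) (by omega); omega
  have hPC : P.card + C.card = Fintype.card V := card_filter_add_card_filter_not _
  obtain ⟨Q, hQmem, hQmax⟩ := exists_max_image (C.powersetCard s) (fun S => ∑ v ∈ S, y v)
    (powersetCard_nonempty.2 (by omega))
  obtain ⟨hQC, hQs⟩ := mem_powersetCard.1 hQmem
  obtain ⟨q, hq, hqmin⟩ := exists_min_image Q y (card_pos.1 (by omega))
  have hCy : ∀ v ∈ C, y v ≤ 0 := fun v hv => not_lt.1 (mem_filter.1 hv).2
  have hPsum : ∑ v ∈ P, y v ≤ P.card * ((k - 1 : ℕ) * -y q) := by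
    rw [← nsmul_eq_mul]
    refine sum_le_card_nsmul P y _ fun v hv => ?_
    have hvQ : v ∉ Q := fun h => (hCy v (hQC h)).not_gt (mem_filter.1 hv).2
    linarith [hG.add_mul_le_zero_of_forall_le hk hy (hQs ▸ le_rfl) hvQ hqmin]
  have hQsum : ∑ v ∈ Q, y v ≤ 0 := sum_nonpos fun v hv => hCy v (hQC hv)
  have hRsum : ∑ v ∈ C \ Q, y v ≤ (C \ Q).card * y q := by
    rw [← nsmul_eq_mul]
    exact sum_le_card_nsmul _ y _ fun u hu => le_of_forall_sum_le_sum hQC (hQs ▸ hQmax) hu hq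
  have hRcard : (oRamsey k - 1) * (k - 1) ≤ (C \ Q).card := by
    rw [card_sdiff_of_subset hQC]
    omega
  have hq0 : y q ≤ 0 := hCy q (hQC hq)
  have h1 : ∑ v ∈ P, y v ≤ (oRamsey k - 1 : ℕ) * ((k - 1 : ℕ) * -y q) :=
    hPsum.trans (mul_le_mul_of_nonneg_right (by exact_mod_cast Nat.le_sub_one_of_lt hP)
      (mul_nonneg (Nat.cast_nonneg _) (by linarith)))
  have h2 : ∑ v ∈ C \ Q, y v ≤ ((oRamsey k - 1) * (k - 1) : ℕ) * y q :=
    hRsum.trans (mul_le_mul_of_nonpos_right (by exact_mod_cast hRcard) hq0)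
  rw [← sum_filter_add_sum_filter_not univ (0 < y ·), ← sum_sdiff hQC]
  push_cast at h1 h2
  linarith

theorem IsTournament.hasPerfectFracTiling [Fintype V] (hG : G.IsTournament) (hk : 2 ≤ k)
    (hn : (oRamsey k - 1) * (k - 1) + oRamsey k + 2 * oRamsey (k - 1) ≤ Fintype.card V) :
    G.HasPerfectFracTiling k := by
  have : Nonempty V := Fintype.card_pos_iff.1 (by have := one_le_oRamsey (j := k) (by omega); omega)
  exact hasPerfectFracTiling_of_forall_sum_nonpos (by omega) fun y hy =>
    hG.sum_nonpos_of_forall_isTTCopy hk hn hy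

end Dual

end OrientedGraph

theorem exists_tournament_not_hasPerfectFracTiling {k n : ℕ} (hk : 2 ≤ k) (hn : 1 ≤ n)
    (hnr : n ≤ 2 * oRamsey (k - 1) - 1) :
    ∃ G : OrientedGraph (Fin n), G.IsTournament ∧ ¬ G.HasPerfectFracTiling k := by
  obtain ⟨j, rfl⟩ : ∃ j, k = j + 1 := ⟨k - 1, by omega⟩
  rw [Nat.add_sub_cancel] at hnr
  obtain ⟨G₀, hG₀, hfree⟩ := exists_tournament_forall_not_isTTHom (j := j) (by omega)
  obtain ⟨S, hS, -, hSn⟩ := exists_subsuperset_card_eq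
    (singleton_subset_iff.2
      (mem_univ (none : Option (Fin (oRamsey j - 1) ⊕ Fin (oRamsey j - 1)))))
    (by simpa using hn) (by simp; omega)
  obtain ⟨ι, hι⟩ := exists_embedding_fin_range_eq hSn
  obtain ⟨x, hx⟩ : none ∈ Set.range ι := hι ▸ hS (mem_singleton_self _)
  refine ⟨(G₀.triangleBlowup G₀).comap ι, (hG₀.triangleBlowup hG₀).comap ι.injective,
    not_hasPerfectFracTiling_of_forall_notMem (by omega) (x := x) fun U hU hxU => ?_⟩
  exact none_notMem_of_isTTCopy_triangleBlowup hfree hfree (hU.map ι)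
    (hx ▸ mem_map_of_mem ι hxU)

/-- For `k ≥ 3`, there exists a tournament on `2·r(k-1) - 1` vertices with no perfect
fractional `T_k`-tiling; hence `trs(k) ≥ 2·r(k-1)`. -/
theorem stmt_7 (k : ℕ) (hk : 3 ≤ k) :
    (∃ G : OrientedGraph (Fin (2 * oRamsey (k - 1) - 1)), G.IsTournament ∧
      ¬ G.HasPerfectFracTiling k) ∧ 2 * oRamsey (k - 1) ≤ trs k := by
  have hr : 1 ≤ oRamsey (k - 1) := one_le_oRamsey (by omega)
  refine ⟨exists_tournament_not_hasPerfectFracTiling (by omega) (by omega) le_rfl, ?_⟩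
  refine le_csInf ⟨(oRamsey k - 1) * (k - 1) + oRamsey k + 2 * oRamsey (k - 1), by omega,
    fun G hG => hG.hasPerfectFracTiling (by omega) (by simp)⟩ ?_
  rintro n ⟨hn, htiling⟩
  by_contra! hlt
  obtain ⟨G, hG, hno⟩ :=
    exists_tournament_not_hasPerfectFracTiling (k := k) (by omega) hn (by omega)
  exact hno (htiling G hG)
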